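/- arXiv:2207.06295 — 2 statements merged into one kernel-verified Lean document; each statement's English description precedes it below -/
import Mathlib

section
/- Let ψ ∈ ℂ³⊗ℂ³ be the spin-0 singlet state of two spin-1 particles, ψ = (|1,-1⟩ − |0,0⟩ + |-1,1⟩)/√3 in the S_z product eigenbasis. Then for every unit vector w, the observables S_w²⊗I and I⊗S_w² are perfectly correlated on ψ: ψ lies in the kernel of (S_w²⊗I − I⊗S_w²). -/
noncomputable section
open Matrix

/-- The standard spin-1 matrix `S_x` on `ℂ³`. -/
def Sx : Matrix (Fin 3) (Fin 3) ℂ :=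
  ((Real.sqrt 2 : ℂ))⁻¹ • !![0, 1, 0; 1, 0, 1; 0, 1, 0]

/-- The standard spin-1 matrix `S_y` on `ℂ³`. -/
def Sy : Matrix (Fin 3) (Fin 3) ℂ :=
  ((Real.sqrt 2 : ℂ))⁻¹ • !![0, -Complex.I, 0; Complex.I, 0, -Complex.I; 0, Complex.I, 0]

/-- The standard spin-1 matrix `S_z = diag(1,0,-1)` on `ℂ³`. -/
def Sz : Matrix (Fin 3) (Fin 3) ℂ := !![1, 0, 0; 0, 0, 0; 0, 0, -1]

/-- Vectors in `ℝ³`. -/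
abbrev V3 := Fin 3 → ℝ

/-- The Euclidean inner product on `ℝ³`. -/
def dot3 (x y : V3) : ℝ := x 0 * y 0 + x 1 * y 1 + x 2 * y 2

/-- The spin component operator `S_w = w₁S_x + w₂S_y + w₃S_z` in direction `w`. -/
def Sdir (w : V3) : Matrix (Fin 3) (Fin 3) ℂ :=
  (w 0 : ℂ) • Sx + (w 1 : ℂ) • Sy + (w 2 : ℂ) • Sz

open TensorProduct

/-- The `S_z` eigenbasis of `ℂ³`: `ket 0 = |1⟩`, `ket 1 = |0⟩`, `ket 2 = |-1⟩`. -/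
def ket (i : Fin 3) : Fin 3 → ℂ := Pi.single i 1

/-- The spin-0 singlet state of two spin-1 particles,
`ψ = (|1,-1⟩ − |0,0⟩ + |-1,1⟩)/√3`. -/
def singlet : (Fin 3 → ℂ) ⊗[ℂ] (Fin 3 → ℂ) :=
  ((Real.sqrt 3 : ℂ))⁻¹ • (ket 0 ⊗ₜ ket 2 - ket 1 ⊗ₜ ket 1 + ket 2 ⊗ₜ ket 0)

/-!
The singlet has total spin zero: `(S_w ⊗ I + I ⊗ S_w) ψ = 0`. As `S_w ⊗ I` and `I ⊗ S_w` commute,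
applying `S_w ⊗ I` once more turns this into `(S_w² ⊗ I) ψ = (I ⊗ S_w²) ψ`.

Total spin zero is a matrix identity: `ψ = (√3)⁻¹ ∑ J i j • |i⟩ ⊗ |j⟩` with `J` antidiagonal with
signs `(1, -1, 1)`, and `(A ⊗ I + I ⊗ A) ψ` has coefficient matrix `(√3)⁻¹ (A J + J Aᵀ)`, which
vanishes for every `S_w` because `J S_wᵀ J⁻¹ = -S_w`.
-/

open LinearMap

theorem LinearMap.commute_rTensor_lTensor {R M N : Type*} [CommSemiring R] [AddCommMonoid M]
    [AddCommMonoid N] [Module R M] [Module R N] (f : Module.End R M) (g : Module.End R N) :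
    Commute (f.rTensor N) (g.lTensor M) :=
  (rTensor_comp_lTensor (f := f) (g := g)).trans (lTensor_comp_rTensor (f := f) (g := g)).symm

theorem Commute.sq_apply_eq_of_apply_eq_neg {R M : Type*} [Semiring R] [AddCommGroup M]
    [Module R M] {P Q : Module.End R M} (hPQ : Commute P Q) {v : M} (h : P v = -Q v) :
    (P ^ 2) v = (Q ^ 2) v :=
  calc (P ^ 2) v = P (-Q v) := by rw [sq, Module.End.mul_apply, h]
    _ = -Q (P v) := by rw [map_neg, ← Module.End.mul_apply, hPQ.eq, Module.End.mul_apply]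
    _ = (Q ^ 2) v := by rw [h, map_neg, neg_neg, sq, Module.End.mul_apply]

theorem LinearMap.rTensor_sq_apply_eq_lTensor_sq_apply {R M N : Type*} [CommSemiring R]
    [AddCommGroup M] [AddCommGroup N] [Module R M] [Module R N] {f : Module.End R M}
    {g : Module.End R N} {v : M ⊗[R] N} (h : f.rTensor N v + g.lTensor M v = 0) :
    (f ^ 2).rTensor N v = (g ^ 2).lTensor M v := by
  rw [← rTensor_pow, ← lTensor_pow]
  exact (commute_rTensor_lTensor f g).sq_apply_eq_of_apply_eq_neg (eq_neg_of_add_eq_zero_left h)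

/-- `singlet = (√3)⁻¹ • ∑ i j, singletCoeff i j • ket i ⊗ₜ ket j`. -/
def singletCoeff : Matrix (Fin 3) (Fin 3) ℂ := !![0, 0, 1; 0, -1, 0; 1, 0, 0]

theorem repr_rTensor_add_lTensor_singlet (A : Matrix (Fin 3) (Fin 3) ℂ) (k j : Fin 3) :
    ((Pi.basisFun ℂ (Fin 3)).tensorProduct (Pi.basisFun ℂ (Fin 3))).repr
      (A.mulVecLin.rTensor _ singlet + A.mulVecLin.lTensor _ singlet) (k, j) =
      (Real.sqrt 3 : ℂ)⁻¹ * (A * singletCoeff + singletCoeff * Aᵀ) k j := by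
  fin_cases k <;> fin_cases j <;>
    simp [singlet, ket, singletCoeff, Matrix.mul_apply, Matrix.vecMul, dotProduct,
      Fin.sum_univ_three, mul_add]

theorem rTensor_add_lTensor_singlet_eq_zero {A : Matrix (Fin 3) (Fin 3) ℂ}
    (hA : A * singletCoeff + singletCoeff * Aᵀ = 0) :
    A.mulVecLin.rTensor _ singlet + A.mulVecLin.lTensor _ singlet = 0 := by
  refine ((Pi.basisFun ℂ (Fin 3)).tensorProduct (Pi.basisFun ℂ (Fin 3))).ext_elem
    fun ⟨k, j⟩ => ?_
  rw [repr_rTensor_add_lTensor_singlet, hA]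
  simp

theorem Sdir_mul_singletCoeff_add_singletCoeff_mul_transpose (w : V3) :
    Sdir w * singletCoeff + singletCoeff * (Sdir w)ᵀ = 0 := by
  ext i j
  fin_cases i <;> fin_cases j <;>
    simp [Sdir, Sx, Sy, Sz, singletCoeff, Matrix.vecMul, dotProduct, Fin.sum_univ_three]

theorem singlet_twin_correlation_general (w : V3) :
    ((TensorProduct.map (Sdir w ^ 2).mulVecLin LinearMap.id -
      TensorProduct.map LinearMap.id (Sdir w ^ 2).mulVecLin :
      (Fin 3 → ℂ) ⊗[ℂ] (Fin 3 → ℂ) →ₗ[ℂ] (Fin 3 → ℂ) ⊗[ℂ] (Fin 3 → ℂ))) singlet = 0 := by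
  have hspin := rTensor_add_lTensor_singlet_eq_zero
    (Sdir_mul_singletCoeff_add_singletCoeff_mul_transpose w)
  rw [LinearMap.sub_apply, sub_eq_zero, sq, Matrix.mulVecLin_mul, ← Module.End.mul_eq_comp, ← sq]
  exact rTensor_sq_apply_eq_lTensor_sq_apply hspin

/-- **TWIN correlations.** For every unit direction `w`, the singlet state lies in the
kernel of `S_w² ⊗ I − I ⊗ S_w²`: measurements of the squared spin component in the same
direction on the two particles always agree. -/
theorem singlet_twin_correlation (w : V3) (hw : dot3 w w = 1) :
    ((TensorProduct.map (Sdir w ^ 2).mulVecLin LinearMap.id -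
      TensorProduct.map LinearMap.id (Sdir w ^ 2).mulVecLin :
      (Fin 3 → ℂ) ⊗[ℂ] (Fin 3 → ℂ) →ₗ[ℂ] (Fin 3 → ℂ) ⊗[ℂ] (Fin 3 → ℂ))) singlet = 0 :=
  singlet_twin_correlation_general w
end
end

section
/- There is no function f : S² → {0,1}, constant on antipodal pairs, such that any two orthogonal unit vectors x ⊥ y never satisfy f(x) = f(y) = 0 while every orthonormal triple contains at least one vector with value 0. -/
noncomputable section

/-- `x` is a unit vector. -/
def UnitVec3 (x : V3) : Prop := dot3 x x = 1

/-- `x` and `y` are orthogonal. -/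
def Orth3 (x y : V3) : Prop := dot3 x y = 0

/-!
Kochen–Specker's lemma: if `u, u', w` is an orthonormal frame and `u` is coloured `0`, so is
`u + t u'` whenever `8 t ^ 2 ≤ 1`. Otherwise the frame
`u + t u', w, t u - u'` forces a `0` at `t u - u'`; every vector orthogonal to `u` or to
`t u - u'` is then coloured `1`, so `u' + γ w ⊥ u` and `γ u + t γ u' - t w ⊥ t u - u'`, which
are orthogonal, force a `0` at their cross product, and for `γ` as in `exists_gadget_param` the
cross products for `γ` and `-γ` are orthogonal. Transporting colourings by similarities, five
such rotations take a `0` on one coordinate axis to a `0` on an orthogonal one, while the frame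
of coordinate axes must contain a `0`.
-/

namespace KochenSpecker

lemma dot3_smul_smul (c d : ℝ) (x y : V3) : dot3 (c • x) (d • y) = c * d * dot3 x y := by
  simp only [dot3, Pi.smul_apply, smul_eq_mul]
  ring

lemma dot3_self_eq_zero {x : V3} : dot3 x x = 0 ↔ x = 0 := by
  rw [← dotProduct_self_eq_zero]
  simp [dot3, dotProduct, Fin.sum_univ_three]

lemma dot3_self_pos {x : V3} (hx : x ≠ 0) : 0 < dot3 x x :=
  lt_of_le_of_ne
    (add_nonneg (add_nonneg (mul_self_nonneg _) (mul_self_nonneg _)) (mul_self_nonneg _))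
    (Ne.symm (mt dot3_self_eq_zero.1 hx))

lemma vec3_ne_zero {a b c : ℝ} (h : a ≠ 0 ∨ b ≠ 0 ∨ c ≠ 0) : ![a, b, c] ≠ 0 := by
  intro h0
  rcases h with h | h | h
  exacts [h (congrFun h0 0), h (congrFun h0 1), h (congrFun h0 2)]

lemma orth3_vec {a b c a' b' c' : ℝ} :
    Orth3 ![a, b, c] ![a', b', c'] ↔ a * a' + b * b' + c * c' = 0 := by
  simp [Orth3, dot3]

def normalize (x : V3) : V3 := (√(dot3 x x))⁻¹ • x

lemma unitVec3_normalize {x : V3} (hx : x ≠ 0) : UnitVec3 (normalize x) := by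
  have hpos := dot3_self_pos hx
  rw [UnitVec3, normalize, dot3_smul_smul, ← mul_inv, Real.mul_self_sqrt hpos.le,
    inv_mul_cancel₀ hpos.ne']

lemma orth3_normalize {x y : V3} (h : Orth3 x y) : Orth3 (normalize x) (normalize y) := by
  rw [Orth3, normalize, normalize, dot3_smul_smul, h, mul_zero]

/-- A `{0,1}`-colouring of the lines of `ℝ³` with exactly one `0` in every orthogonal frame;
`Z x` says that the line through `x` has colour `0`. -/
structure IsKSColoring (Z : V3 → Prop) : Prop where
  not_and : ∀ x y : V3, x ≠ 0 → y ≠ 0 → Orth3 x y → ¬ (Z x ∧ Z y)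
  or_or : ∀ x y z : V3, x ≠ 0 → y ≠ 0 → z ≠ 0 → Orth3 x y → Orth3 x z → Orth3 y z →
    Z x ∨ Z y ∨ Z z

lemma isKSColoring_of_unitVec3 {f : V3 → Fin 2}
    (hpair : ∀ x y : V3, UnitVec3 x → UnitVec3 y → Orth3 x y → ¬ (f x = 0 ∧ f y = 0))
    (htriple : ∀ x y z : V3, UnitVec3 x → UnitVec3 y → UnitVec3 z →
      Orth3 x y → Orth3 x z → Orth3 y z → (f x = 0 ∨ f y = 0 ∨ f z = 0)) :
    IsKSColoring fun x => f (normalize x) = 0 where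
  not_and _ _ hx hy hxy :=
    hpair _ _ (unitVec3_normalize hx) (unitVec3_normalize hy) (orth3_normalize hxy)
  or_or _ _ _ hx hy hz hxy hxz hyz :=
    htriple _ _ _ (unitVec3_normalize hx) (unitVec3_normalize hy) (unitVec3_normalize hz)
      (orth3_normalize hxy) (orth3_normalize hxz) (orth3_normalize hyz)

/-- `γ ^ 2` is a root of `(1 + t ^ 2) s ^ 2 + (2 t ^ 2 - 1) s + t ^ 2`, whose discriminant
is `1 - 8 t ^ 2`. -/
lemma exists_gadget_param {t : ℝ} (ht : 8 * t ^ 2 ≤ 1) :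
    ∃ γ : ℝ, γ ≠ 0 ∧ t ^ 2 * (1 + γ ^ 2) ^ 2 = γ ^ 2 * (1 - γ ^ 2) := by
  obtain ⟨r, hr0, hr⟩ : ∃ r : ℝ, 0 ≤ r ∧ r ^ 2 = 1 - 8 * t ^ 2 :=
    ⟨√(1 - 8 * t ^ 2), Real.sqrt_nonneg _, Real.sq_sqrt (by linarith)⟩
  set s := (1 - 2 * t ^ 2 + r) / (2 * (1 + t ^ 2)) with hs_def
  have hs : 0 < s := by
    have : 0 < 1 - 2 * t ^ 2 + r := by nlinarith
    positivity
  refine ⟨√s, (Real.sqrt_pos.2 hs).ne', ?_⟩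
  rw [Real.sq_sqrt hs.le, hs_def]
  field_simp
  linear_combination (1 + t ^ 2) * hr

/-- Multiplication by `a + b i` on the first two coordinates and by `|a + b i|` on the third:
a similarity of ratio `a ^ 2 + b ^ 2` preserving the plane `x 2 = 0`. -/
def rotDilation (a b : ℝ) (x : V3) : V3 :=
  ![a * x 0 - b * x 1, b * x 0 + a * x 1, √(a ^ 2 + b ^ 2) * x 2]

lemma dot3_rotDilation (a b : ℝ) (x y : V3) :
    dot3 (rotDilation a b x) (rotDilation a b y) = (a ^ 2 + b ^ 2) * dot3 x y := by
  have h := Real.mul_self_sqrt (add_nonneg (sq_nonneg a) (sq_nonneg b))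
  simp only [dot3, rotDilation, Matrix.cons_val_zero, Matrix.cons_val_one, Matrix.cons_val]
  linear_combination (x 2 * y 2) * h

def cycle (x : V3) : V3 := ![x 2, x 0, x 1]

lemma dot3_cycle (x y : V3) : dot3 (cycle x) (cycle y) = dot3 x y := by
  simp only [dot3, cycle, Matrix.cons_val_zero, Matrix.cons_val_one, Matrix.cons_val]
  ring

namespace IsKSColoring

variable {Z : V3 → Prop}

lemma comp (hZ : IsKSColoring Z) {φ : V3 → V3} {c : ℝ} (hc : c ≠ 0)
    (hφ : ∀ x y, dot3 (φ x) (φ y) = c * dot3 x y) : IsKSColoring (Z ∘ φ) := by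
  have hne {x : V3} (hx : x ≠ 0) : φ x ≠ 0 := fun h =>
    hx <| dot3_self_eq_zero.1 <|
      (mul_eq_zero.1 (by rw [← hφ, h, dot3_self_eq_zero])).resolve_left hc
  have horth {x y : V3} (h : Orth3 x y) : Orth3 (φ x) (φ y) := by rw [Orth3, hφ, h, mul_zero]
  exact ⟨fun x y hx hy hxy => hZ.not_and _ _ (hne hx) (hne hy) (horth hxy),
    fun x y z hx hy hz hxy hxz hyz =>
      hZ.or_or _ _ _ (hne hx) (hne hy) (hne hz) (horth hxy) (horth hxz) (horth hyz)⟩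

lemma zero_gadget (hZ : IsKSColoring Z) {t γ : ℝ} (hγ : γ ≠ 0) (h0 : Z ![1, 0, 0])
    (hD : Z ![t, -1, 0]) :
    Z ![-(t * (1 + γ ^ 2)), γ ^ 2, -γ] := by
  have hU : ¬ Z ![0, 1, γ] := fun hU =>
    hZ.not_and _ _ (vec3_ne_zero (by norm_num)) (vec3_ne_zero (by norm_num))
      (orth3_vec.2 (by ring)) ⟨h0, hU⟩
  have hV : ¬ Z ![γ, t * γ, -t] := fun hV =>
    hZ.not_and _ _ (vec3_ne_zero (by norm_num)) (vec3_ne_zero (.inl hγ))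
      (orth3_vec.2 (by ring)) ⟨hD, hV⟩
  have := hZ.or_or ![0, 1, γ] ![γ, t * γ, -t] ![-(t * (1 + γ ^ 2)), γ ^ 2, -γ]
    (vec3_ne_zero (by norm_num)) (vec3_ne_zero (.inl hγ))
    (vec3_ne_zero (.inr (.inl (pow_ne_zero 2 hγ)))) (orth3_vec.2 (by ring))
    (orth3_vec.2 (by ring)) (orth3_vec.2 (by ring))
  tauto

lemma zero_rotate_e₀ (hZ : IsKSColoring Z) {t : ℝ} (ht : 8 * t ^ 2 ≤ 1) (h0 : Z ![1, 0, 0]) :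
    Z ![1, t, 0] := by
  obtain ⟨γ, hγ, hγt⟩ := exists_gadget_param ht
  by_contra hQ
  have hC : ¬ Z ![0, 0, 1] := fun hC =>
    hZ.not_and _ _ (vec3_ne_zero (by norm_num)) (vec3_ne_zero (by norm_num))
      (orth3_vec.2 (by ring)) ⟨h0, hC⟩
  have hD : Z ![t, -1, 0] := by
    have := hZ.or_or ![1, t, 0] ![0, 0, 1] ![t, -1, 0] (vec3_ne_zero (by norm_num))
      (vec3_ne_zero (by norm_num)) (vec3_ne_zero (by norm_num)) (orth3_vec.2 (by ring))
      (orth3_vec.2 (by ring)) (orth3_vec.2 (by ring))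
    tauto
  exact hZ.not_and _ _ (vec3_ne_zero (.inr (.inl (pow_ne_zero 2 hγ))))
    (vec3_ne_zero (.inr (.inl (pow_ne_zero 2 (neg_ne_zero.2 hγ)))))
    (orth3_vec.2 (by linear_combination hγt))
    ⟨hZ.zero_gadget hγ h0 hD, hZ.zero_gadget (neg_ne_zero.2 hγ) h0 hD⟩

lemma zero_rotate (hZ : IsKSColoring Z) {a b t : ℝ} (ht : 8 * t ^ 2 ≤ 1) (hab : a ≠ 0 ∨ b ≠ 0)
    (h : Z ![a, b, 0]) : Z ![a - b * t, b + a * t, 0] := by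
  have hc : a ^ 2 + b ^ 2 ≠ 0 := by rcases hab with hab | hab <;> positivity
  have h' : (Z ∘ rotDilation a b) ![1, t, 0] :=
    (hZ.comp hc (dot3_rotDilation a b)).zero_rotate_e₀ ht (by simpa [rotDilation] using h)
  simpa [rotDilation] using h'

lemma not_zero_e₀ (hZ : IsKSColoring Z) : ¬ Z ![1, 0, 0] := by
  intro h0
  -- the first four points are `(3 + i) ^ k / 3 ^ k`, and `(28 + 96 i) (1 + 7 i / 24)` is imaginary
  have h1 := hZ.zero_rotate (t := 1 / 3) (by norm_num) (by norm_num) h0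
  norm_num at h1
  have h2 := hZ.zero_rotate (t := 1 / 3) (by norm_num) (by norm_num) h1
  norm_num at h2
  have h3 := hZ.zero_rotate (t := 1 / 3) (by norm_num) (by norm_num) h2
  norm_num at h3
  have h4 := hZ.zero_rotate (t := 1 / 3) (by norm_num) (by norm_num) h3
  norm_num at h4
  have h5 := hZ.zero_rotate (t := 7 / 24) (by norm_num) (by norm_num) h4
  norm_num at h5
  exact hZ.not_and _ _ (vec3_ne_zero (by norm_num)) (vec3_ne_zero (by norm_num))
    (orth3_vec.2 (by ring)) ⟨h0, h5⟩

end IsKSColoring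

theorem not_isKSColoring (Z : V3 → Prop) : ¬ IsKSColoring Z := by
  intro hZ
  have hcycle (x y : V3) : dot3 (cycle x) (cycle y) = 1 * dot3 x y := by rw [dot3_cycle, one_mul]
  have hZ' := hZ.comp one_ne_zero hcycle
  have h₁ : ¬ Z ![0, 1, 0] := by simpa [cycle] using hZ'.not_zero_e₀
  have h₂ : ¬ Z ![0, 0, 1] := by simpa [cycle] using (hZ'.comp one_ne_zero hcycle).not_zero_e₀
  rcases hZ.or_or ![1, 0, 0] ![0, 1, 0] ![0, 0, 1] (vec3_ne_zero (by norm_num))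
    (vec3_ne_zero (by norm_num)) (vec3_ne_zero (by norm_num)) (orth3_vec.2 (by ring))
    (orth3_vec.2 (by ring)) (orth3_vec.2 (by ring)) with h | h | h
  exacts [hZ.not_zero_e₀ h, h₁ h, h₂ h]

end KochenSpecker

open KochenSpecker in
/-- **Kochen–Specker obstruction, reformulated.** There is no `{0,1}`-valued function on
the unit sphere, constant on antipodal pairs, such that no two orthogonal unit vectors both
take the value `0` while every orthonormal triple contains at least one vector of value `0`. -/
theorem no_antipodal_ks_coloring :
    ¬ ∃ f : V3 → Fin 2,
      (∀ x : V3, UnitVec3 x → f (-x) = f x) ∧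
      (∀ x y : V3, UnitVec3 x → UnitVec3 y → Orth3 x y → ¬ (f x = 0 ∧ f y = 0)) ∧
      (∀ x y z : V3, UnitVec3 x → UnitVec3 y → UnitVec3 z →
        Orth3 x y → Orth3 x z → Orth3 y z → (f x = 0 ∨ f y = 0 ∨ f z = 0)) := by
  rintro ⟨f, -, hpair, htriple⟩
  exact not_isKSColoring _ (isKSColoring_of_unitVec3 hpair htriple)
end
end
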